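/- arXiv:2312.00350 — 2 statements merged into one kernel-verified Lean document; each statement's English description precedes it below -/
import Mathlib

section
/- For u > arccosh(3/2), the second derivative of φ(u) = arccosh(cosh u − 1/2) satisfies φ″(u) = (−2cosh²u + cosh u − 2)/(4 sinh³ φ(u)) < 0. -/
noncomputable def arcosh (x : ℝ) : ℝ := Real.log (x + Real.sqrt (x ^ 2 - 1))

noncomputable def kappa : ℝ := arcosh (3 / 2)

noncomputable def phi (u : ℝ) : ℝ := arcosh (Real.cosh u - 1 / 2)

/-!
On `cosh u > 3/2` we have `cosh φ = cosh u - 1/2`, so `φ' = sinh u / sinh φ` and differentiating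
once more, with `sinh² φ = (cosh u - 1/2)² - 1` and `sinh² u = cosh² u - 1`, leaves the numerator
`(-2 cosh² u + cosh u - 2) / 4`, which has negative discriminant.
-/

open Real (cosh sinh)

theorem arcosh_eq_real_arcosh : arcosh = Real.arcosh := rfl

theorem lt_cosh_of_arcosh_lt {x u : ℝ} (hx : 1 ≤ x) (h : arcosh x < u) : x < cosh u := by
  have h0 : 0 ≤ Real.arcosh x := Real.arcosh_nonneg hx
  rw [arcosh_eq_real_arcosh] at h
  rw [← Real.cosh_arcosh hx, Real.cosh_lt_cosh, abs_of_nonneg h0, abs_of_nonneg (h0.trans h.le)]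
  exact h

theorem three_halves_lt_cosh_of_kappa_lt {u : ℝ} (hu : kappa < u) : 3 / 2 < cosh u :=
  lt_cosh_of_arcosh_lt (by norm_num) hu

section
variable {u : ℝ}

theorem cosh_phi (h : 3 / 2 ≤ cosh u) : cosh (phi u) = cosh u - 1 / 2 :=
  Real.cosh_arcosh (by linarith)

theorem sinh_phi (h : 3 / 2 ≤ cosh u) : sinh (phi u) = √((cosh u - 1 / 2) ^ 2 - 1) :=
  Real.sinh_arcosh (by linarith)

theorem sinh_phi_pos (h : 3 / 2 < cosh u) : 0 < sinh (phi u) :=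
  Real.sinh_pos_iff.2 (Real.arcosh_pos (by linarith))

theorem hasDerivAt_phi (h : 3 / 2 < cosh u) : HasDerivAt phi (sinh u / sinh (phi u)) u := by
  have harg : cosh u - 1 / 2 ∈ Set.Ioi 1 := by rw [Set.mem_Ioi]; linarith
  have hd := (Real.hasDerivAt_arcosh harg).comp u ((Real.hasDerivAt_cosh u).sub_const (1 / 2))
  rwa [← sinh_phi h.le, inv_mul_eq_div] at hd

theorem deriv_phi_eventuallyEq (h : 3 / 2 < cosh u) :
    deriv phi =ᶠ[nhds u] fun v => sinh v / sinh (phi v) := by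
  filter_upwards [continuousAt_const.eventually_lt Real.continuous_cosh.continuousAt h] with v hv
  exact (hasDerivAt_phi hv).deriv

theorem hasDerivAt_sinh_div_sinh_phi (h : 3 / 2 < cosh u) :
    HasDerivAt (fun v => sinh v / sinh (phi v))
      ((-2 * cosh u ^ 2 + cosh u - 2) / (4 * sinh (phi u) ^ 3)) u := by
  have hs := sinh_phi_pos h
  refine ((Real.hasDerivAt_sinh u).div ((Real.hasDerivAt_sinh (phi u)).comp u (hasDerivAt_phi h))
    hs.ne').congr_deriv ?_
  have hsφ : sinh (phi u) ^ 2 = (cosh u - 1 / 2) ^ 2 - 1 := by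
    rw [← cosh_phi h.le, Real.cosh_sq]; ring
  have hsu : sinh u ^ 2 = cosh u ^ 2 - 1 := by rw [Real.cosh_sq]; ring
  rw [Function.comp_apply, cosh_phi h.le]
  field_simp
  linear_combination (8 * cosh u) * hsφ - (8 * cosh u - 4) * hsu

end

theorem phi_second_deriv (u : ℝ) (hu : kappa < u) :
    deriv (deriv phi) u
        = (-2 * Real.cosh u ^ 2 + Real.cosh u - 2) / (4 * Real.sinh (phi u) ^ 3) ∧
      deriv (deriv phi) u < 0 := by
  have h := three_halves_lt_cosh_of_kappa_lt hu
  have hd2 : deriv (deriv phi) u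
      = (-2 * cosh u ^ 2 + cosh u - 2) / (4 * sinh (phi u) ^ 3) :=
    (deriv_phi_eventuallyEq h).deriv_eq.trans (hasDerivAt_sinh_div_sinh_phi h).deriv
  have hnum : -2 * cosh u ^ 2 + cosh u - 2 < 0 := by nlinarith [sq_nonneg (4 * cosh u - 1)]
  have hden : 0 < 4 * sinh (phi u) ^ 3 := by have := sinh_phi_pos h; positivity
  exact ⟨hd2, hd2 ▸ div_neg_of_neg_of_pos hnum hden⟩
end

section
/- Let u > arccosh(3/2), φ(u) = arccosh(cosh u − 1/2), and p ≥ 1 an integer. Then L_p(u) := Li₂(e^{−u−φ(u)}) − Li₂(e^{−u+φ(u)}) + u·φ(u) + 4pπ² > 0. -/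
noncomputable def Li2 (x : ℝ) : ℝ := ∑' n : ℕ, x ^ (n + 1) / ((n : ℝ) + 1) ^ 2

/-! Crude bounds suffice: `0 ≤ Li₂` on `[0, 1]`, `Li₂ ≤ ζ(2) = π²/6` on `[-1, 1]`, and
`0 ≤ φ(u) ≤ u` (as `φ(u) = arcosh (cosh u - 1/2) ≤ arcosh (cosh u) = u`), so the exponents
`-u ± φ(u)` are `≤ 0` and `L_p(u) ≥ 4pπ² - π²/6 > 0`. -/

open scoped Real

lemma hasSum_one_div_nat_add_one_sq :
    HasSum (fun n : ℕ => 1 / ((n : ℝ) + 1) ^ 2) (π ^ 2 / 6) := by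
  have h := (hasSum_nat_add_iff (f := fun n : ℕ => 1 / (n : ℝ) ^ 2) 1).mpr
    (by simpa using hasSum_zeta_two)
  simpa using h

lemma Li2_nonneg {x : ℝ} (hx : 0 ≤ x) : 0 ≤ Li2 x :=
  tsum_nonneg fun n => by positivity

lemma Li2_le_pi_sq_div_six {x : ℝ} (hx : |x| ≤ 1) : Li2 x ≤ π ^ 2 / 6 := by
  have hs := hasSum_one_div_nat_add_one_sq
  have hnorm : ∀ n : ℕ, ‖x ^ (n + 1) / ((n : ℝ) + 1) ^ 2‖ ≤ 1 / ((n : ℝ) + 1) ^ 2 := by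
    intro n
    rw [norm_div, norm_pow, Real.norm_eq_abs, Real.norm_of_nonneg (by positivity)]
    gcongr
    exact pow_le_one₀ (abs_nonneg x) hx
  calc Li2 x ≤ ∑' n : ℕ, 1 / ((n : ℝ) + 1) ^ 2 :=
        (Summable.of_norm_bounded hs.summable hnorm).tsum_le_tsum
          (fun n => (le_abs_self _).trans (hnorm n)) hs.summable
    _ = π ^ 2 / 6 := hs.tsum_eq

-- `arcosh` is `Real.arcosh` by definition, so Mathlib's lemmas about it apply verbatim.
lemma kappa_nonneg : 0 ≤ kappa := Real.arcosh_nonneg (by norm_num)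

lemma cosh_kappa : Real.cosh kappa = 3 / 2 := Real.cosh_arcosh (by norm_num)

lemma one_le_cosh_sub_half {u : ℝ} (hu : kappa < u) : 1 ≤ Real.cosh u - 1 / 2 := by
  have : Real.cosh kappa ≤ Real.cosh u := by
    rw [Real.cosh_le_cosh, abs_of_nonneg kappa_nonneg, abs_of_nonneg (kappa_nonneg.trans hu.le)]
    exact hu.le
  linarith [cosh_kappa]

lemma phi_nonneg {u : ℝ} (hu : kappa < u) : 0 ≤ phi u :=
  Real.arcosh_nonneg (one_le_cosh_sub_half hu)

lemma phi_le {u : ℝ} (hu : kappa < u) : phi u ≤ u := by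
  have hcosh := one_le_cosh_sub_half hu
  calc phi u ≤ Real.arcosh (Real.cosh u) :=
        (Real.arcosh_le_arcosh (by linarith) (Real.cosh_pos u)).mpr (by linarith)
    _ = u := Real.arcosh_cosh (kappa_nonneg.trans hu.le)

theorem Lp_pos (p : ℕ) (hp : 1 ≤ p) (u : ℝ) (hu : kappa < u) :
    0 < Li2 (Real.exp (-u - phi u)) - Li2 (Real.exp (-u + phi u))
      + u * phi u + 4 * p * Real.pi ^ 2 := by
  have hLi2_first : 0 ≤ Li2 (Real.exp (-u - phi u)) := Li2_nonneg (Real.exp_nonneg _)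
  have hLi2_second : Li2 (Real.exp (-u + phi u)) ≤ π ^ 2 / 6 := by
    apply Li2_le_pi_sq_div_six
    rw [abs_of_nonneg (Real.exp_nonneg _), Real.exp_le_one_iff]
    linarith [phi_le hu]
  have hprod : 0 ≤ u * phi u := mul_nonneg (kappa_nonneg.trans hu.le) (phi_nonneg hu)
  have hpi : π ^ 2 ≤ p * π ^ 2 :=
    le_mul_of_one_le_left (by positivity) (by exact_mod_cast hp)
  linarith [pow_pos Real.pi_pos 2]
end
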